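/- Combining Γ*(θ) ≥ 1/(4H(θ)) with the finite-time regret lower bound R(T) ≥ (1/(6k))·exp(−200T/((log k)·H(θ)) + 2√(T log(6Tk))): any algorithm satisfies, on at least one of the k hard instances, limsup_{T→∞} −(1/T)·log R(T) ≤ (800/log k)·Γ*(θ). -/

import Mathlib

/-!
Taking logarithms in the finite-time bound gives
`−(1/T) log R(T) ≤ 200/((log k) H) + log(6k)/T`, the `√` correction only helping, so the
limsup is at most `200/((log k) H) = (800/log k) · 1/(4H) ≤ (800/log k) Γ*`.
-/

open Filter Topology

/-- When `f` is not cobounded, `limsup f l` takes the junk value `0`, hence `hc`. -/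
theorem Real.limsup_le_of_eventuallyLE_of_tendsto {ι : Type*} {l : Filter ι} [l.NeBot]
    {f g : ι → ℝ} {c : ℝ} (hc : 0 ≤ c) (hfg : f ≤ᶠ[l] g) (hg : Tendsto g l (𝓝 c)) :
    limsup f l ≤ c := by
  by_cases hf : IsCoboundedUnder (· ≤ ·) l f
  · calc limsup f l ≤ limsup g l := limsup_le_limsup hfg hf hg.isBoundedUnder_le
      _ = c := hg.limsup_eq
  · rw [Real.limsup_of_not_isCoboundedUnder hf]
    exact hc

theorem neg_inv_mul_log_le_of_mul_exp_le {a E r T : ℝ} (ha : 0 < a) (hT : 0 < T)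
    (h : a * Real.exp E ≤ r) : -(1 / T) * Real.log r ≤ -(Real.log a + E) / T := by
  have hlog : Real.log a + E ≤ Real.log r := by
    rw [← Real.log_exp E, ← Real.log_mul ha.ne' (Real.exp_pos E).ne']
    exact Real.log_le_log (by positivity) h
  rw [neg_div, ← neg_mul_eq_neg_mul, one_div_mul_eq_div, neg_le_neg_iff]
  exact div_le_div_of_nonneg_right hlog hT.le

theorem limsup_neg_inv_mul_log_le_of_mul_exp_le (R s : ℕ → ℝ) {a b : ℝ} (ha : 0 < a)
    (hb : 0 ≤ b) (hs : ∀ T, 0 ≤ s T)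
    (h : ∀ T : ℕ, 1 ≤ T → a * Real.exp (-(b * T) + s T) ≤ R T) :
    limsup (fun T : ℕ => -(1 / (T : ℝ)) * Real.log (R T)) atTop ≤ b := by
  have hg : Tendsto (fun T : ℕ => b - Real.log a / T) atTop (𝓝 b) := by
    simpa using tendsto_const_nhds.sub (tendsto_const_div_atTop_nhds_zero_nat (Real.log a))
  refine Real.limsup_le_of_eventuallyLE_of_tendsto hb ?_ hg
  filter_upwards [eventually_ge_atTop 1] with T hT
  have hT0 : (0 : ℝ) < T := by exact_mod_cast hT
  calc -(1 / (T : ℝ)) * Real.log (R T) ≤ -(Real.log a + (-(b * T) + s T)) / T :=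
        neg_inv_mul_log_le_of_mul_exp_le ha hT0 (h T hT)
    _ = b - Real.log a / T - s T / T := by field_simp; ring
    _ ≤ b - Real.log a / T := sub_le_self _ (div_nonneg (hs T) hT0.le)

/-- Combining `Γ*(θ) ≥ 1/(4H(θ))` with the finite-time lower bound
`R(T) ≥ (1/(6k)) exp(−200T/((log k) H(θ)) + 2√(T log(6Tk)))`, the regret exponent on the hard
instance satisfies `limsup_T −(1/T) log R(T) ≤ (800/log k) Γ*(θ)`. -/
theorem carpentier_locatelli_contradicts_oracle_rate
    (R : ℕ → ℝ) (Γstar H : ℝ) (k : ℕ) (hk : 2 ≤ k) (hH : 0 < H)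
    (hΓ : 1 / (4 * H) ≤ Γstar)
    (hlb : ∀ T : ℕ, 1 ≤ T →
      (1 / (6 * (k : ℝ))) *
        Real.exp (-(200 * T) / (Real.log k * H) + 2 * Real.sqrt ((T : ℝ) * Real.log (6 * T * k)))
        ≤ R T) :
    Filter.limsup (fun T : ℕ => -(1 / (T : ℝ)) * Real.log (R T)) atTop
      ≤ (800 / Real.log k) * Γstar := by
  have hlogk : 0 < Real.log k := Real.log_pos (by exact_mod_cast hk)
  have hexponent : limsup (fun T : ℕ => -(1 / (T : ℝ)) * Real.log (R T)) atTop
      ≤ 200 / (Real.log k * H) := by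
    refine limsup_neg_inv_mul_log_le_of_mul_exp_le R
      (fun T => 2 * Real.sqrt ((T : ℝ) * Real.log (6 * T * k))) (a := 1 / (6 * (k : ℝ)))
      (by positivity) (by positivity)
      (fun T => by positivity) (fun T hT => ?_)
    rw [show -(200 / (Real.log k * H) * T) = -(200 * T) / (Real.log k * H) by ring]
    exact hlb T hT
  calc _ ≤ 200 / (Real.log k * H) := hexponent
    _ = (800 / Real.log k) * (1 / (4 * H)) := by field_simp; ring
    _ ≤ (800 / Real.log k) * Γstar := by gcongr
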